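/- arXiv:1801.00368 — 5 statements merged into one kernel-verified Lean document; each statement's English description precedes it below -/
import Mathlib

section
/- Let Omega be a subset of {1,...,m} x {1,...,n} and let G be the bipartite graph on vertex sets {rows} and {columns} with an edge (i,j) whenever (i,j) is in Omega. The restriction of the sampling map R_Omega (extracting the entries indexed by Omega) to rank-one m-by-n real matrices with all entries nonzero is injective if and only if G is connected. -/
/-!
A rank-one matrix with nonzero entries is `u vᵀ` with `u, v` nowhere zero, and `u vᵀ = u' v'ᵀ` on
`Ω` says exactly that `u i / u' i = v' j / v j` for every edge `(i, j)` of the bipartite graph.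
Connectedness of the graph is equivalent to: any row labels `r` and column labels `c` with
`r i = c j` along the edges satisfy `r i = c j` everywhere. Applied to the ratios this gives
injectivity; conversely, labels violating it (constant on a component, different elsewhere)
exponentiate to a rank-one matrix that agrees with the all-ones matrix on `Ω`.
-/

/-- The bipartite graph on rows and columns with an edge `(i,j)` whenever `(i,j) ∈ Ω`. -/
def bipartiteGraph (m n : ℕ) (Ω : Set (Fin m × Fin n)) :
    SimpleGraph (Sum (Fin m) (Fin n)) where
  Adj u v :=
    (∃ i j, u = Sum.inl i ∧ v = Sum.inr j ∧ (i, j) ∈ Ω) ∨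
    (∃ i j, u = Sum.inr j ∧ v = Sum.inl i ∧ (i, j) ∈ Ω)
  symm := by
    constructor
    rintro u v (⟨i, j, rfl, rfl, h⟩ | ⟨i, j, rfl, rfl, h⟩)
    · exact Or.inr ⟨i, j, rfl, rfl, h⟩
    · exact Or.inl ⟨i, j, rfl, rfl, h⟩
  loopless := by
    constructor
    rintro u (⟨i, j, rfl, h, _⟩ | ⟨i, j, rfl, h, _⟩) <;> simp at h

open Matrix Real

namespace Matrix

variable {K m n : Type*} [Field K] [Fintype n]

theorem exists_eq_vecMulVec_of_rank_le_one {A : Matrix m n K} (hA : A.rank ≤ 1) :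
    ∃ (u : m → K) (v : n → K), A = vecMulVec u v := by
  have := Module.Finite.span_of_finite K (Set.finite_range A.col)
  rw [rank_eq_finrank_span_cols, finrank_le_one_iff] at hA
  obtain ⟨w, hw⟩ := hA
  choose c hc using fun j => hw ⟨A.col j, Submodule.subset_span ⟨j, rfl⟩⟩
  refine ⟨w, c, ext fun i j => ?_⟩
  have hcol := congrArg (fun z : Submodule.span K (Set.range A.col) => (z : m → K) i) (hc j)
  simpa [vecMulVec_apply, mul_comm] using hcol.symm

theorem rank_vecMulVec_eq_one {u : m → K} {v : n → K} {i : m} {j : n} (h : u i * v j ≠ 0) :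
    (vecMulVec u v).rank = 1 := by
  refine le_antisymm (rank_vecMulVec_le u v) ?_
  set minor := (vecMulVec u v).submatrix (fun _ : Fin 1 => i) fun _ : Fin 1 => j
  have hminor : minor.det ≠ 0 := by simpa [minor, vecMulVec_apply] using h
  calc 1 = minor.rank := by rw [rank_of_det_ne_zero hminor, Fintype.card_fin]
    _ ≤ (vecMulVec u v).rank := rank_submatrix_le _ _ _

end Matrix

theorem SimpleGraph.Reachable.apply_eq_of_adj {V β : Type*} {G : SimpleGraph V} {f : V → β}
    (hf : ∀ v w, G.Adj v w → f v = f w) {v w : V} (h : G.Reachable v w) : f v = f w := by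
  obtain ⟨p⟩ := h
  induction p with
  | nil => rfl
  | cons hadj _ ih => exact (hf _ _ hadj).trans ih

theorem bipartiteGraph_adj_inl_inr {m n : ℕ} {Ω : Set (Fin m × Fin n)} {i : Fin m} {j : Fin n}
    (hij : (i, j) ∈ Ω) : (bipartiteGraph m n Ω).Adj (.inl i) (.inr j) :=
  Or.inl ⟨i, j, rfl, rfl, hij⟩

theorem eq_of_bipartiteGraph_connected {β : Type*} {m n : ℕ} {Ω : Set (Fin m × Fin n)}
    (hconn : (bipartiteGraph m n Ω).Connected) {r : Fin m → β}
    {c : Fin n → β} (hrc : ∀ p ∈ Ω, r p.1 = c p.2) (i : Fin m) (j : Fin n) : r i = c j := by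
  refine (hconn.preconnected (.inl i) (.inr j)).apply_eq_of_adj (f := Sum.elim r c) ?_
  rintro _ _ (⟨i, j, rfl, rfl, hij⟩ | ⟨i, j, rfl, rfl, hij⟩)
  exacts [hrc _ hij, (hrc _ hij).symm]

theorem bipartiteGraph_connected_of_forall_eq {β : Type*} [Nontrivial β] {m n : ℕ} (hm : 0 < m)
    (hn : 0 < n) {Ω : Set (Fin m × Fin n)}
    (h : ∀ (r : Fin m → β) (c : Fin n → β), (∀ p ∈ Ω, r p.1 = c p.2) → ∀ i j, r i = c j) :
    (bipartiteGraph m n Ω).Connected := by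
  classical
  set G := bipartiteGraph m n Ω
  have : Nonempty (Fin m) := ⟨⟨0, hm⟩⟩
  refine (SimpleGraph.connected_iff G).2 ⟨fun v w => ?_, inferInstance⟩
  obtain ⟨x, y, hxy⟩ := exists_pair_ne β
  set f : Fin m ⊕ Fin n → β := fun u => if G.Reachable v u then x else y
  have hrc : ∀ i j, f (.inl i) = f (.inr j) := by
    refine h _ _ fun p hp => ?_
    have hadj := bipartiteGraph_adj_inl_inr hp
    have hreach : G.Reachable v (.inl p.1) ↔ G.Reachable v (.inr p.2) :=
      ⟨fun hv => hv.trans hadj.reachable, fun hv => hv.trans hadj.symm.reachable⟩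
    simp only [f, if_congr hreach rfl rfl]
  have hconst : ∀ u, f u = f (.inr ⟨0, hn⟩) := by
    rintro (i | j)
    · exact hrc i _
    · exact (hrc ⟨0, hm⟩ j).symm.trans (hrc _ _)
  by_contra hvw
  have hfw : f w = y := if_neg hvw
  have hfv : f v = x := if_pos (.refl v)
  exact hxy (by rw [← hfv, ← hfw, hconst v, hconst w])

theorem vecMulVec_eq_of_bipartiteGraph_connected {K : Type*} [Field K] {m n : ℕ}
    {Ω : Set (Fin m × Fin n)} (hconn : (bipartiteGraph m n Ω).Connected) {u u' : Fin m → K}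
    {v v' : Fin n → K} (hu' : ∀ i, u' i ≠ 0) (hv : ∀ j, v j ≠ 0)
    (hagree : ∀ p ∈ Ω, vecMulVec u v p.1 p.2 = vecMulVec u' v' p.1 p.2) :
    vecMulVec u v = vecMulVec u' v' := by
  have hratio : ∀ i j, vecMulVec u v i j = vecMulVec u' v' i j ↔ u i / u' i = v' j / v j :=
    fun i j => by rw [vecMulVec_apply, vecMulVec_apply, div_eq_div_iff (hu' i) (hv j),
      mul_comm (v' j)]
  ext i j
  exact (hratio i j).2 <|
    eq_of_bipartiteGraph_connected hconn (r := fun i => u i / u' i) (c := fun j => v' j / v j)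
      (fun p hp => (hratio p.1 p.2).1 (hagree p hp)) i j

/-- The sampling map `R_Ω` is injective on rank-one `m × n` matrices with all nonzero
entries if and only if the bipartite graph associated to `Ω` is connected. -/
theorem rank_one_completion_iff_connected (m n : ℕ) (hm : 0 < m) (hn : 0 < n)
    (Ω : Set (Fin m × Fin n)) :
    (∀ X X' : Matrix (Fin m) (Fin n) ℝ,
        X.rank = 1 → (∀ i j, X i j ≠ 0) →
        X'.rank = 1 → (∀ i j, X' i j ≠ 0) →
        (∀ p ∈ Ω, X p.1 p.2 = X' p.1 p.2) → X = X')
      ↔ (bipartiteGraph m n Ω).Connected := by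
  constructor
  · intro hinj
    refine bipartiteGraph_connected_of_forall_eq (β := ℝ) hm hn fun r c hrc i j => ?_
    set X := vecMulVec (fun i => exp (r i)) (fun j => exp (-c j))
    have hX : ∀ i j, X i j = exp (r i - c j) := by
      simp [X, vecMulVec_apply, sub_eq_add_neg, exp_add]
    have hones : ∀ i j, vecMulVec (1 : Fin m → ℝ) (1 : Fin n → ℝ) i j = 1 := by
      simp [vecMulVec_apply]
    have hXeq : X = vecMulVec 1 1 := hinj _ _
      (rank_vecMulVec_eq_one (i := ⟨0, hm⟩) (j := ⟨0, hn⟩) (by positivity))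
      (fun i j => hX i j ▸ (exp_pos _).ne')
      (rank_vecMulVec_eq_one (i := ⟨0, hm⟩) (j := ⟨0, hn⟩) (by simp))
      (fun i j => by simp [hones])
      (fun p hp => by rw [hX, hones, hrc p hp, sub_self, exp_zero])
    simpa [hX, hones, sub_eq_zero] using congrFun₂ hXeq i j
  · intro hconn X X' hX hX0 hX' hX'0 hagree
    obtain ⟨u, v, rfl⟩ := exists_eq_vecMulVec_of_rank_le_one hX.le
    obtain ⟨u', v', rfl⟩ := exists_eq_vecMulVec_of_rank_le_one hX'.le
    exact vecMulVec_eq_of_bipartiteGraph_connected hconn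
      (fun i => left_ne_zero_of_mul (hX'0 i ⟨0, hn⟩))
      (fun j => right_ne_zero_of_mul (hX0 ⟨0, hm⟩ j)) hagree
end

section
/- If the bipartite graph associated to Omega is disconnected, then the sampling map R_Omega is not injective on the set of rank-one matrices with all nonzero entries: there exist two distinct rank-one matrices X, X' with all entries nonzero such that X_{ij} = X'_{ij} for all (i,j) in Omega. -/
/-!
Fix a connected component `K` of the bipartite graph, multiply the rows in `K` by `2` and divide
the columns in `K` by `2`. An entry `(i, j)` with `i` and `j` in the same component is unchanged,
and every `(i, j) ∈ Ω` is such an entry, so the rescaled all-ones matrix agrees with the all-ones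
matrix on `Ω`. Disconnectedness provides a row and a column in different components, and there
the two matrices differ.
-/

open SimpleGraph

theorem SimpleGraph.Preconnected.of_reachable_inl_inr {α β : Type*} [Nonempty α] [Nonempty β]
    {G : SimpleGraph (α ⊕ β)} (h : ∀ a b, G.Reachable (.inl a) (.inr b)) :
    G.Preconnected := by
  obtain ⟨a₀⟩ := ‹Nonempty α›
  obtain ⟨b₀⟩ := ‹Nonempty β›
  have reach_inl : ∀ a, G.Reachable (.inl a₀) (.inl a) := fun a =>
    (h a₀ b₀).trans (h a b₀).symm
  have reach_inr : ∀ b, G.Reachable (.inl a₀) (.inr b) := h a₀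
  have reach : ∀ w, G.Reachable (.inl a₀) w := by
    rintro (a | b)
    exacts [reach_inl a, reach_inr b]
  exact fun v w => (reach v).symm.trans (reach w)

theorem bipartiteGraph_adj_of_mem {m n : ℕ} {Ω : Set (Fin m × Fin n)} {i : Fin m} {j : Fin n}
    (h : (i, j) ∈ Ω) : (bipartiteGraph m n Ω).Adj (.inl i) (.inr j) :=
  Or.inl ⟨i, j, rfl, rfl, h⟩

theorem exists_not_reachable_of_not_connected {m n : ℕ} (hm : 0 < m) (hn : 0 < n)
    {Ω : Set (Fin m × Fin n)} (hdis : ¬ (bipartiteGraph m n Ω).Connected) :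
    ∃ i j, ¬ (bipartiteGraph m n Ω).Reachable (.inl i) (.inr j) := by
  have : Nonempty (Fin m) := ⟨⟨0, hm⟩⟩
  have : Nonempty (Fin n) := ⟨⟨0, hn⟩⟩
  by_contra! h
  exact hdis ⟨Preconnected.of_reachable_inl_inr h⟩

/-- If the bipartite graph associated to `Ω` is disconnected, then `R_Ω` is not injective
on rank-one matrices with all nonzero entries: there exist two distinct rank-one matrices
`X = x yᵀ`, `X' = x' y'ᵀ` with all entries nonzero agreeing on `Ω`. -/
theorem disconnected_not_injective (m n : ℕ) (hm : 0 < m) (hn : 0 < n)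
    (Ω : Set (Fin m × Fin n))
    (hdis : ¬ (bipartiteGraph m n Ω).Connected) :
    ∃ (x x' : Fin m → ℝ) (y y' : Fin n → ℝ),
      (∀ i, x i ≠ 0) ∧ (∀ i, x' i ≠ 0) ∧ (∀ j, y j ≠ 0) ∧ (∀ j, y' j ≠ 0) ∧
      (fun i j => x i * y j) ≠ (fun i j => x' i * y' j) ∧
      (∀ p ∈ Ω, x p.1 * y p.2 = x' p.1 * y' p.2) := by
  classical
  obtain ⟨i₀, j₀, hij₀⟩ := exists_not_reachable_of_not_connected hm hn hdis
  set G := bipartiteGraph m n Ω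
  let f : G.ConnectedComponent → ℝ := fun C =>
    if C = G.connectedComponentMk (.inl i₀) then 2 else 1
  let c : Fin m ⊕ Fin n → ℝ := fun w => f (G.connectedComponentMk w)
  have hc : ∀ w, c w ≠ 0 := fun w => by dsimp only [c, f]; split_ifs <;> norm_num
  have hc_edge : ∀ p ∈ Ω, c (.inl p.1) = c (.inr p.2) := fun p hp =>
    congrArg f (ConnectedComponent.eq.mpr (bipartiteGraph_adj_of_mem hp).reachable)
  have hc_i₀ : c (.inl i₀) = 2 := if_pos rfl
  have hc_j₀ : c (.inr j₀) = 1 := if_neg fun h => hij₀ (ConnectedComponent.exact h).symm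
  refine ⟨fun i => c (.inl i), 1, fun j => (c (.inr j))⁻¹, 1, fun _ => hc _,
    fun _ => one_ne_zero, fun _ => inv_ne_zero (hc _), fun _ => one_ne_zero, fun h => ?_,
    fun p hp => ?_⟩
  · have := congrFun (congrFun h i₀) j₀
    norm_num [hc_i₀, hc_j₀] at this
  · simp [hc_edge p hp, hc]
end

section
/- If the bipartite graph associated to Omega is connected, and X = x y^T, X' = x' y'^T are rank-one matrices with all entries nonzero that agree on Omega, then X = X'. -/
/-!
The ratios `x i / x' i` (rows) and `y' j / y j` (columns) form a function on the vertices of the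
bipartite graph; agreement of the two products on `(i, j) ∈ Ω` says exactly that this function
takes the same value at the two ends of every edge. On a connected graph it is therefore
constant, which gives `x i * y j = x' i * y' j` for every pair `(i, j)`.
-/

namespace SimpleGraph

variable {V β : Type*} {G : SimpleGraph V} {f : V → β}

theorem Reachable.apply_eq_of_adj_s12 (hf : ∀ u v, G.Adj u v → f u = f v) {u v : V}
    (h : G.Reachable u v) : f u = f v := by
  obtain ⟨p⟩ := h
  induction p with
  | nil => rfl
  | cons hadj _ ih => exact (hf _ _ hadj).trans ih

theorem Connected.apply_eq_of_adj_s12 (hG : G.Connected) (hf : ∀ u v, G.Adj u v → f u = f v)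
    (u v : V) : f u = f v :=
  (hG.preconnected u v).apply_eq_of_adj_s12 hf

end SimpleGraph

theorem bipartiteGraph.eq_of_connected {m n : ℕ} {Ω : Set (Fin m × Fin n)} {β : Type*}
    (hconn : (bipartiteGraph m n Ω).Connected) {f : Fin m → β} {g : Fin n → β}
    (h : ∀ p ∈ Ω, f p.1 = g p.2) (i : Fin m) (j : Fin n) : f i = g j := by
  refine hconn.apply_eq_of_adj_s12 (f := Sum.elim f g) ?_ (.inl i) (.inr j)
  rintro _ _ (⟨i, j, rfl, rfl, hij⟩ | ⟨i, j, rfl, rfl, hij⟩)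
  · exact h (i, j) hij
  · exact (h (i, j) hij).symm

theorem connected_injective_general (m n : ℕ) (Ω : Set (Fin m × Fin n))
    (hconn : (bipartiteGraph m n Ω).Connected)
    (x x' : Fin m → ℝ) (y y' : Fin n → ℝ)
    (hx' : ∀ i, x' i ≠ 0)
    (hy : ∀ j, y j ≠ 0)
    (h : ∀ p ∈ Ω, x p.1 * y p.2 = x' p.1 * y' p.2) :
    ∀ i j, x i * y j = x' i * y' j := by
  intro i j
  have hratio : x i / x' i = y' j / y j :=
    bipartiteGraph.eq_of_connected hconn (f := fun i => x i / x' i) (g := fun j => y' j / y j)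
      (fun p hp => (div_eq_div_iff (hx' _) (hy _)).2 ((h p hp).trans (mul_comm _ _))) i j
  exact ((div_eq_div_iff (hx' i) (hy j)).1 hratio).trans (mul_comm _ _)

/-- If the bipartite graph associated to `Ω` is connected and `X = x yᵀ`, `X' = x' y'ᵀ`
are rank-one matrices with all nonzero entries agreeing on `Ω`, then `X = X'`. -/
theorem connected_injective (m n : ℕ) (Ω : Set (Fin m × Fin n))
    (hconn : (bipartiteGraph m n Ω).Connected)
    (x x' : Fin m → ℝ) (y y' : Fin n → ℝ)
    (hx : ∀ i, x i ≠ 0) (hx' : ∀ i, x' i ≠ 0)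
    (hy : ∀ j, y j ≠ 0) (hy' : ∀ j, y' j ≠ 0)
    (h : ∀ p ∈ Ω, x p.1 * y p.2 = x' p.1 * y' p.2) :
    ∀ i j, x i * y j = x' i * y' j :=
  connected_injective_general m n Ω hconn x x' y y' hx' hy h
end

section
/- Let K be a convex cone (the PSD cone) and suppose M0 is feasible for the SDP: minimize Tr(M) subject to A(M) = b, M PSD. If there exists Y = I - Y1 - xi with Y1 in the range of A*, <xi, M - M0> = 0 for all feasible M, Y m0 = 0 where M0 = m0 m0^T, and v^T Y v > 0 for all v not proportional to m0, and additionally the linear map A is injective on T = {m0 v^T + v m0^T : v}, then M0 is the unique minimizer of the SDP. -/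
open scoped BigOperators Matrix

/-!
Writing `M0 = m0 m0ᵀ`, the certificate gives `Tr M - Tr M0 = ⟨Y, M - M0⟩ = ⟨Y, M⟩` for every
feasible `M`. Since `Y` is positive semidefinite with kernel spanned by `m0`, decomposing a PSD
`M = ∑ vᵢ vᵢᵀ` shows `⟨Y, M⟩ = ∑ vᵢᵀ Y vᵢ ≥ 0`, with equality only when every `vᵢ` is a
multiple of `m0`, i.e. when `M = t M0`. Such an `M` lies in the tangent space `T`, so injectivity
of `A` on `T` forces `M = M0`.
-/

/-- The Frobenius inner product of two real matrices. -/
def frob {N : ℕ} (A B : Matrix (Fin N) (Fin N) ℝ) : ℝ :=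
  ∑ i, ∑ j, A i j * B i j

open Matrix

namespace Matrix

theorem vecMulVec_add_vecMulVec_smul_self {n R : Type*} [CommSemiring R] (v : n → R) (s : R) :
    vecMulVec v (s • v) + vecMulVec (s • v) v = (2 * s) • vecMulVec v v := by
  rw [vecMulVec_smul, smul_vecMulVec, ← add_smul, two_mul]

theorem PosSemidef.exists_eq_sum_vecMulVec_self {n : Type*} [Finite n] {M : Matrix n n ℝ}
    (hM : M.PosSemidef) : ∃ (k : ℕ) (v : Fin k → n → ℝ), M = ∑ i, vecMulVec (v i) (v i) := by
  simpa only [star_trivial] using posSemidef_iff_eq_sum_vecMulVec.mp hM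

end Matrix

section Frobenius

variable {N : ℕ}

theorem frob_sub_left (A B C : Matrix (Fin N) (Fin N) ℝ) :
    frob (A - B) C = frob A C - frob B C := by
  simp [frob, sub_mul, Finset.sum_sub_distrib]

theorem frob_sub_right (A B C : Matrix (Fin N) (Fin N) ℝ) :
    frob A (B - C) = frob A B - frob A C := by
  simp [frob, mul_sub, Finset.sum_sub_distrib]

theorem frob_sum_right {ι : Type*} (s : Finset ι) (Y : Matrix (Fin N) (Fin N) ℝ)
    (M : ι → Matrix (Fin N) (Fin N) ℝ) : frob Y (∑ i ∈ s, M i) = ∑ i ∈ s, frob Y (M i) := by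
  simp only [frob, Matrix.sum_apply, Finset.mul_sum]
  rw [Finset.sum_comm_cycle]

theorem frob_one_left (M : Matrix (Fin N) (Fin N) ℝ) : frob 1 M = M.trace := by
  simp [frob, Matrix.one_apply, Matrix.trace]

theorem frob_vecMulVec_self (Y : Matrix (Fin N) (Fin N) ℝ) (v : Fin N → ℝ) :
    frob Y (vecMulVec v v) = v ⬝ᵥ Y *ᵥ v := by
  simp only [frob, vecMulVec_apply, dotProduct, mulVec, Finset.mul_sum]
  exact Finset.sum_congr rfl fun _ _ => Finset.sum_congr rfl fun _ _ => by ring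

end Frobenius

section Certificate

variable {N m : ℕ} {A : Matrix (Fin N) (Fin N) ℝ →ₗ[ℝ] (Fin m → ℝ)} {m0 : Fin N → ℝ}
  {Y Y1 ξ M : Matrix (Fin N) (Fin N) ℝ}

theorem trace_sub_trace_eq_frob (hY : Y = 1 - Y1 - ξ)
    (hY1 : ∀ M : Matrix (Fin N) (Fin N) ℝ, A M = 0 → frob Y1 M = 0)
    (hξ : ∀ M : Matrix (Fin N) (Fin N) ℝ, M.PosSemidef →
      A M = A (vecMulVec m0 m0) → frob ξ (M - vecMulVec m0 m0) = 0)
    (hker : Y *ᵥ m0 = 0) (hM : M.PosSemidef) (hfeas : A M = A (vecMulVec m0 m0)) :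
    M.trace - (vecMulVec m0 m0).trace = frob Y M := by
  have hdiff : frob Y (M - vecMulVec m0 m0) = M.trace - (vecMulVec m0 m0).trace := by
    rw [hY, frob_sub_left, frob_sub_left, frob_one_left, trace_sub,
      hY1 _ (by rw [map_sub, hfeas, sub_self]), hξ M hM hfeas, sub_zero, sub_zero]
  rw [← hdiff, frob_sub_right, frob_vecMulVec_self, hker, dotProduct_zero, sub_zero]

end Certificate

section QuadraticForm

variable {n : Type*} [Fintype n] {Y : Matrix n n ℝ} {m0 : n → ℝ}

theorem dotProduct_mulVec_self_nonneg (hker : Y *ᵥ m0 = 0)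
    (hpos : ∀ v : n → ℝ, (¬ ∃ c : ℝ, v = c • m0) → 0 < v ⬝ᵥ Y *ᵥ v) (v : n → ℝ) :
    0 ≤ v ⬝ᵥ Y *ᵥ v := by
  by_cases hv : ∃ c : ℝ, v = c • m0
  · obtain ⟨c, rfl⟩ := hv
    simp [mulVec_smul, hker]
  · exact (hpos v hv).le

end QuadraticForm

section PosSemidef

variable {N : ℕ} {Y M : Matrix (Fin N) (Fin N) ℝ} {m0 : Fin N → ℝ}

theorem frob_nonneg_of_posSemidef (hker : Y *ᵥ m0 = 0)
    (hpos : ∀ v : Fin N → ℝ, (¬ ∃ c : ℝ, v = c • m0) → 0 < v ⬝ᵥ Y *ᵥ v) (hM : M.PosSemidef) :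
    0 ≤ frob Y M := by
  obtain ⟨k, v, rfl⟩ := hM.exists_eq_sum_vecMulVec_self
  rw [frob_sum_right]
  exact Finset.sum_nonneg fun i _ => by
    rw [frob_vecMulVec_self]
    exact dotProduct_mulVec_self_nonneg hker hpos (v i)

theorem exists_eq_smul_vecMulVec_of_frob_eq_zero (hker : Y *ᵥ m0 = 0)
    (hpos : ∀ v : Fin N → ℝ, (¬ ∃ c : ℝ, v = c • m0) → 0 < v ⬝ᵥ Y *ᵥ v) (hM : M.PosSemidef)
    (h : frob Y M = 0) : ∃ t : ℝ, M = t • vecMulVec m0 m0 := by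
  obtain ⟨k, v, rfl⟩ := hM.exists_eq_sum_vecMulVec_self
  simp only [frob_sum_right, frob_vecMulVec_self] at h
  have hzero := (Finset.sum_eq_zero_iff_of_nonneg fun i _ =>
    dotProduct_mulVec_self_nonneg hker hpos (v i)).mp h
  have hrow (i : Fin k) : ∃ c : ℝ, v i = c • m0 := by
    by_contra hi
    exact (hpos _ hi).ne' (hzero i (Finset.mem_univ i))
  choose c hc using hrow
  refine ⟨∑ i, c i * c i, ?_⟩
  simp only [hc, vecMulVec_smul, smul_vecMulVec, smul_smul, Finset.sum_smul]

end PosSemidef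

theorem smul_vecMulVec_self_eq_of_injOn_tangent {n β : Type*} {A : Matrix n n ℝ → β}
    {m0 : n → ℝ}
    (hinj : ∀ v v' : n → ℝ, A (vecMulVec m0 v + vecMulVec v m0) =
      A (vecMulVec m0 v' + vecMulVec v' m0) →
      vecMulVec m0 v + vecMulVec v m0 = vecMulVec m0 v' + vecMulVec v' m0)
    {t : ℝ} (h : A (t • vecMulVec m0 m0) = A (vecMulVec m0 m0)) :
    t • vecMulVec m0 m0 = vecMulVec m0 m0 := by
  have htangent (s : ℝ) :
      s • vecMulVec m0 m0 = vecMulVec m0 ((s / 2) • m0) + vecMulVec ((s / 2) • m0) m0 := by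
    rw [vecMulVec_add_vecMulVec_smul_self, mul_div_cancel₀ s two_ne_zero]
  have h1 := htangent 1
  rw [one_smul] at h1
  rw [htangent t, h1] at h ⊢
  exact hinj _ _ h

/-- Dual-certificate sufficient conditions for unique recovery in the SDP
`min Tr(M)` s.t. `A(M) = A(M0)`, `M ⪰ 0`, where `M0 = m0 m0ᵀ`: if
`Y = I - Y1 - ξ` with `Y1` in the range of `A*`, `⟨ξ, M - M0⟩ = 0` for all feasible `M`,
`Y m0 = 0`, `vᵀ Y v > 0` for all `v` not proportional to `m0`, and `A` is injective on
the tangent space `T = {m0 vᵀ + v m0ᵀ}`, then `M0` is the unique minimizer. -/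
theorem sdp_unique_minimizer (N m : ℕ)
    (A : Matrix (Fin N) (Fin N) ℝ →ₗ[ℝ] (Fin m → ℝ))
    (m0 : Fin N → ℝ)
    (Y Y1 ξ : Matrix (Fin N) (Fin N) ℝ)
    (hY : Y = 1 - Y1 - ξ)
    (hY1 : ∀ M : Matrix (Fin N) (Fin N) ℝ, A M = 0 → frob Y1 M = 0)
    (hξ : ∀ M : Matrix (Fin N) (Fin N) ℝ, M.PosSemidef →
      A M = A (Matrix.vecMulVec m0 m0) → frob ξ (M - Matrix.vecMulVec m0 m0) = 0)
    (hker : Y.mulVec m0 = 0)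
    (hpos : ∀ v : Fin N → ℝ, (¬ ∃ c : ℝ, v = c • m0) → 0 < v ⬝ᵥ Y.mulVec v)
    (hinj : ∀ v v' : Fin N → ℝ,
      A (Matrix.vecMulVec m0 v + Matrix.vecMulVec v m0) =
        A (Matrix.vecMulVec m0 v' + Matrix.vecMulVec v' m0) →
      Matrix.vecMulVec m0 v + Matrix.vecMulVec v m0 =
        Matrix.vecMulVec m0 v' + Matrix.vecMulVec v' m0) :
    ∀ M : Matrix (Fin N) (Fin N) ℝ, M.PosSemidef →
      A M = A (Matrix.vecMulVec m0 m0) → M ≠ Matrix.vecMulVec m0 m0 →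
      (Matrix.vecMulVec m0 m0).trace < M.trace := by
  intro M hM hfeas hne
  rw [← sub_pos, trace_sub_trace_eq_frob hY hY1 hξ hker hM hfeas]
  refine (frob_nonneg_of_posSemidef hker hpos hM).lt_of_ne fun h0 => hne ?_
  obtain ⟨t, rfl⟩ := exists_eq_smul_vecMulVec_of_frob_eq_zero hker hpos hM h0.symm
  exact smul_vecMulVec_self_eq_of_injOn_tangent hinj hfeas
end

section
/- If H is a symmetric matrix with H_{T-perp} PSD, Y2 symmetric with <H_{T-perp}, (Y2)_{T-perp}> <= 0 and Tr(H) <= 0, then Tr(H_{T-perp}) <= |<H, Y2>|, where H_T denotes projection onto the tangent space T at a rank-one matrix m0 m0^T and I_T = (Y2)_T. -/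
open scoped BigOperators Matrix

/-- Orthogonal projection (in the Frobenius inner product) onto the tangent space
`T = {m0 vᵀ + v m0ᵀ : v}` at the rank-one matrix `m0 m0ᵀ`. -/
noncomputable def projT (N : ℕ) (m0 : Fin N → ℝ)
    (X : Matrix (Fin N) (Fin N) ℝ) : Matrix (Fin N) (Fin N) ℝ :=
  let P := (1 / (∑ i, (m0 i) ^ 2)) • Matrix.vecMulVec m0 m0
  P * X + X * P - P * X * P

/-!
`projT` is `X ↦ P X + X P - P X P` for the orthogonal projector `P` onto the line of `m0`, hence
self-adjoint and idempotent for the Frobenius form `⟨A, B⟩ = tr (Aᵀ B)`. Therefore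
`⟨H_{T⊥}, (Y2)_{T⊥}⟩ = ⟨H, Y2⟩ - ⟨H, (Y2)_T⟩ = ⟨H, Y2⟩ - ⟨H, I_T⟩ = ⟨H, Y2⟩ - tr H_T`, and so
`tr H_{T⊥} = tr H - tr H_T = tr H - ⟨H, Y2⟩ + ⟨H_{T⊥}, (Y2)_{T⊥}⟩ ≤ -⟨H, Y2⟩ ≤ |⟨H, Y2⟩|`.
-/

open Matrix

section TangentProj

variable {n R : Type*} [Fintype n] [CommRing R]

def tangentProj (P X : Matrix n n R) : Matrix n n R :=
  P * X + X * P - P * X * P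

variable {P : Matrix n n R}

theorem trace_transpose_tangentProj_mul (hP : Pᵀ = P) (X Y : Matrix n n R) :
    ((tangentProj P X)ᵀ * Y).trace = (Xᵀ * tangentProj P Y).trace := by
  simp only [tangentProj, transpose_sub, transpose_add, transpose_mul, hP, sub_mul, add_mul,
    mul_sub, mul_add, trace_sub, trace_add, Matrix.mul_assoc]
  rw [trace_mul_comm P, trace_mul_comm P (Xᵀ * (P * Y))]
  simp only [Matrix.mul_assoc]

theorem tangentProj_tangentProj (hP : P * P = P) (X : Matrix n n R) :
    tangentProj P (tangentProj P X) = tangentProj P X := by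
  simp only [tangentProj, Matrix.mul_add, Matrix.add_mul, Matrix.mul_sub, Matrix.sub_mul,
    ← Matrix.mul_assoc, hP]
  rw [Matrix.mul_assoc X P P, hP, Matrix.mul_assoc (P * X) P P, hP]
  abel

theorem trace_transpose_sub_tangentProj_mul_sub_tangentProj (hPt : Pᵀ = P) (hP : P * P = P)
    (X Y : Matrix n n R) :
    ((X - tangentProj P X)ᵀ * (Y - tangentProj P Y)).trace
      = (Xᵀ * Y).trace - (Xᵀ * tangentProj P Y).trace := by
  simp only [transpose_sub, sub_mul, mul_sub, trace_sub, trace_transpose_tangentProj_mul hPt,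
    tangentProj_tangentProj hP]
  ring

end TangentProj

section LineProj

variable {n K : Type*} [Fintype n] [Field K]

noncomputable def lineProj (v : n → K) : Matrix n n K :=
  (v ⬝ᵥ v)⁻¹ • vecMulVec v v

theorem lineProj_transpose (v : n → K) : (lineProj v)ᵀ = lineProj v := by
  simp [lineProj]

/-- When `v ⬝ᵥ v = 0`, `0⁻¹ = 0` makes `lineProj v = 0`, which is still idempotent. -/
theorem lineProj_mul_self (v : n → K) : lineProj v * lineProj v = lineProj v := by
  by_cases hv : v ⬝ᵥ v = 0
  · simp [lineProj, hv]
  · simp only [lineProj, smul_mul_smul, vecMulVec_mul_vecMulVec, vecMulVec_smul, smul_smul]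
    rw [mul_assoc, inv_mul_cancel₀ hv, mul_one]

end LineProj

variable {N : ℕ}

theorem frob_eq_trace (A B : Matrix (Fin N) (Fin N) ℝ) : frob A B = (Aᵀ * B).trace := by
  simp only [frob, trace, diag_apply, mul_apply, transpose_apply]
  exact Finset.sum_comm

theorem projT_eq_tangentProj (m0 : Fin N → ℝ) : projT N m0 = tangentProj (lineProj m0) := by
  funext X
  simp [projT, tangentProj, lineProj, dotProduct, sq]

theorem trace_Hperp_bound_general (N : ℕ) (m0 : Fin N → ℝ)
    (H Y2 : Matrix (Fin N) (Fin N) ℝ)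
    (hinner : frob (H - projT N m0 H) (Y2 - projT N m0 Y2) ≤ 0)
    (htr : H.trace ≤ 0)
    (hYT : projT N m0 Y2 = projT N m0 1) :
    (H - projT N m0 H).trace ≤ |frob H Y2| := by
  rw [projT_eq_tangentProj] at hinner hYT ⊢
  have key : frob (H - tangentProj (lineProj m0) H) (Y2 - tangentProj (lineProj m0) Y2)
      = frob H Y2 - (tangentProj (lineProj m0) H).trace := by
    rw [frob_eq_trace, frob_eq_trace, trace_transpose_sub_tangentProj_mul_sub_tangentProj
      (lineProj_transpose m0) (lineProj_mul_self m0), hYT,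
      ← trace_transpose_tangentProj_mul (lineProj_transpose m0), Matrix.mul_one, trace_transpose]
  rw [trace_sub]
  linarith [neg_le_abs (frob H Y2)]

/-- If `H` is symmetric with `H_{T⊥}` PSD, `⟨H_{T⊥}, (Y2)_{T⊥}⟩ ≤ 0`, `Tr(H) ≤ 0`,
and `(Y2)_T = I_T`, then `Tr(H_{T⊥}) ≤ |⟨H, Y2⟩|`. -/
theorem trace_Hperp_bound (N : ℕ) (m0 : Fin N → ℝ)
    (H Y2 : Matrix (Fin N) (Fin N) ℝ)
    (hHsymm : H.IsSymm)
    (hHperp : (H - projT N m0 H).PosSemidef)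
    (hinner : frob (H - projT N m0 H) (Y2 - projT N m0 Y2) ≤ 0)
    (htr : H.trace ≤ 0)
    (hYT : projT N m0 Y2 = projT N m0 1) :
    (H - projT N m0 H).trace ≤ |frob H Y2| :=
  trace_Hperp_bound_general N m0 H Y2 hinner htr hYT
end
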